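/- Suppose z - b + Σ_{k=1}^{N-1} w_k/(s_k - z) = -(Σ_{k=1}^N μ_k/(t_k - z))^{-1} (one step of the reversed Stieltjes algorithm), where b > λ s_{N-1}, s_{n+1} > λ s_n > 0 (λ > 1000), w_{n+1}/w_n > κ s_{n+1}/s_n (κ > 10), w_{n+1}/s_{n+1}^2 < θ w_n/s_n^2 (θ < 1), and 10 θ^{-1} s_{N-1}^2 < Σ_k w_k < (1/10) κ^{-1} b s_{N-1}. Then for n < N: (1 - 2/κ) w_n/b < s_n - t_n < (1 + 2/λ + 2/κ) w_n/b, and b < t_N < (1 + 1/(λκ)) b. -/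

import Mathlib

/-!
At a root `t` of `z - b + ∑ₖ wₖ / (sₖ - z)` lying just below the pole `sₙ`,
`wₙ / (sₙ - t) = b - t - Pre - Post`, where `Pre ≤ 0` and `Post ≥ 0` collect the poles below and
above `sₙ`. Lacunarity keeps every other pole at distance `≥ sₖ / 2` from `t`, so both are at most
a multiple of `S = ∑ₖ wₖ / sₖ`; the growth of `wₖ / sₖ` makes `S` comparable to its last term,
which `∑ₖ wₖ < b s_{N-1} / (10κ)` makes `≲ b / (10κ)`. Hence `wₙ / (sₙ - t) = b (1 + O(1/λ + 1/κ))`.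
For the poles below `sₙ` this needs `t > sₙ / 2`, so the upper bound on `sₙ - t` is proved first.
For the last root `t_N > s_{N-1}` every term is negative, which puts `t_N` above `b`, and each is at
most `wₖ / (b - s_{N-1})` in size.
-/

open Finset

theorem sub_one_mul_sum_Icc_le_mul {a : ℕ → ℝ} {κ : ℝ} {m : ℕ} (hm : 1 ≤ m) (h1 : 0 ≤ a 1)
    (hgrow : ∀ k ∈ Ico 1 m, κ * a k ≤ a (k + 1)) :
    (κ - 1) * ∑ k ∈ Icc 1 m, a k ≤ κ * a m := by
  induction m, hm using Nat.le_induction with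
  | base => simp only [Icc_self, sum_singleton]; linarith
  | succ m hm ih =>
    have hstep := hgrow m (mem_Ico.2 ⟨hm, by omega⟩)
    have hprev := ih fun k hk => hgrow k (by simp only [mem_Ico] at hk ⊢; omega)
    rw [sum_Icc_succ_top (by omega), mul_add]
    linarith

theorem sum_Icc_eq_sum_Ico_add_add_sum_Ioc {β : Type*} [AddCommMonoid β] (f : ℕ → β)
    {a b n : ℕ} (hn : n ∈ Icc a b) :
    ∑ k ∈ Icc a b, f k = ∑ k ∈ Ico a n, f k + (f n + ∑ k ∈ Ioc n b, f k) := by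
  obtain ⟨han, hnb⟩ := mem_Icc.1 hn
  rw [← Ico_add_one_right_eq_Icc, ← sum_Ico_consecutive f han (by omega : n ≤ b + 1),
    sum_eq_sum_Ico_succ_bot (by omega : n < b + 1), Ico_add_one_add_one_eq_Ioc]

section Lacunary

variable {s : ℕ → ℝ} {lam : ℝ} {M : ℕ}

theorem pos_of_mul_lt_succ (hlam : 0 ≤ lam) (h1 : 0 < s 1)
    (hstep : ∀ k ∈ Ico 1 M, lam * s k < s (k + 1)) : ∀ k ∈ Icc 1 M, 0 < s k := by
  suffices ∀ k, 1 ≤ k → k ≤ M → 0 < s k from fun k hk => this k (mem_Icc.1 hk).1 (mem_Icc.1 hk).2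
  intro k hk
  induction k, hk using Nat.le_induction with
  | base => exact fun _ => h1
  | succ k hk ih =>
    intro hkM
    have := hstep k (mem_Ico.2 ⟨hk, by omega⟩)
    nlinarith [ih (by omega)]

theorem mul_le_of_lt_of_mul_lt_succ (hlam : 1 ≤ lam) (h1 : 0 < s 1)
    (hstep : ∀ k ∈ Ico 1 M, lam * s k < s (k + 1)) :
    ∀ j ∈ Icc 1 M, ∀ k ∈ Icc 1 M, j < k → lam * s j ≤ s k := by
  intro j hj k hk hjk
  obtain ⟨hj1, -⟩ := mem_Icc.1 hj
  obtain ⟨-, hkM⟩ := mem_Icc.1 hk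
  induction k, hjk using Nat.le_induction with
  | base => exact (hstep j (mem_Ico.2 ⟨hj1, by omega⟩)).le
  | succ k hjk ih =>
    have hsk := pos_of_mul_lt_succ (by linarith) h1 hstep k (mem_Icc.2 ⟨by omega, by omega⟩)
    have := hstep k (mem_Ico.2 ⟨by omega, by omega⟩)
    nlinarith [ih (mem_Icc.2 ⟨by omega, by omega⟩) (by omega)]

theorem le_of_le_of_mul_lt_succ (hlam : 1 ≤ lam) (h1 : 0 < s 1)
    (hstep : ∀ k ∈ Ico 1 M, lam * s k < s (k + 1)) :
    ∀ j ∈ Icc 1 M, ∀ k ∈ Icc 1 M, j ≤ k → s j ≤ s k := by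
  intro j hj k hk hjk
  rcases hjk.eq_or_lt with rfl | hjk
  · exact le_rfl
  · have hsj := pos_of_mul_lt_succ (by linarith) h1 hstep j hj
    nlinarith [mul_le_of_lt_of_mul_lt_succ hlam h1 hstep j hj k hk hjk]

end Lacunary

section PartialFraction

variable {ι : Type*} (I : Finset ι) {w s : ι → ℝ} {z : ℝ}

theorem sum_div_sub_nonneg (hw : ∀ k ∈ I, 0 ≤ w k) (hz : ∀ k ∈ I, z ≤ s k) :
    0 ≤ ∑ k ∈ I, w k / (s k - z) :=
  sum_nonneg fun k hk => div_nonneg (hw k hk) (sub_nonneg.2 (hz k hk))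

theorem sum_div_sub_nonpos (hw : ∀ k ∈ I, 0 ≤ w k) (hz : ∀ k ∈ I, s k ≤ z) :
    ∑ k ∈ I, w k / (s k - z) ≤ 0 :=
  sum_nonpos fun k hk => div_nonpos_of_nonneg_of_nonpos (hw k hk) (sub_nonpos.2 (hz k hk))

theorem sum_div_sub_neg (hI : I.Nonempty) (hw : ∀ k ∈ I, 0 < w k) (hz : ∀ k ∈ I, s k < z) :
    ∑ k ∈ I, w k / (s k - z) < 0 :=
  sum_neg (fun k hk => div_neg_of_pos_of_neg (hw k hk) (sub_neg.2 (hz k hk))) hI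

theorem mul_abs_sum_div_sub_le {c : ℝ} {d : ι → ℝ} (hc : 0 < c) (hw : ∀ k ∈ I, 0 ≤ w k)
    (hd : ∀ k ∈ I, 0 < d k ∧ c * d k ≤ |s k - z|) :
    c * |∑ k ∈ I, w k / (s k - z)| ≤ ∑ k ∈ I, w k / d k :=
  calc c * |∑ k ∈ I, w k / (s k - z)| ≤ ∑ k ∈ I, c * |w k / (s k - z)| := by
        rw [← mul_sum]; exact mul_le_mul_of_nonneg_left (abs_sum_le_sum_abs _ _) hc.le
    _ ≤ ∑ k ∈ I, w k / d k := sum_le_sum fun k hk => by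
        obtain ⟨hd0, hdz⟩ := hd k hk
        rw [abs_div, abs_of_nonneg (hw k hk), ← le_div_iff₀' hc, div_div]
        exact div_le_div_of_nonneg_left (hw k hk) (mul_pos hd0 hc) (by linarith)

theorem sum_div_sub_le_two_mul_sum_div (hw : ∀ k ∈ I, 0 ≤ w k) (hs : ∀ k ∈ I, 0 < s k)
    (hz : ∀ k ∈ I, 2 * z ≤ s k) :
    ∑ k ∈ I, w k / (s k - z) ≤ 2 * ∑ k ∈ I, w k / s k := by
  have := mul_abs_sum_div_sub_le I (s := s) (z := z) (c := 1 / 2) (by norm_num) hw fun k hk =>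
    ⟨hs k hk, le_abs.2 (Or.inl (by linarith [hz k hk]))⟩
  linarith [le_abs_self (∑ k ∈ I, w k / (s k - z))]

theorem neg_sum_div_sub_le_sum_div (hw : ∀ k ∈ I, 0 ≤ w k) (hs : ∀ k ∈ I, 0 < s k)
    (hz : ∀ k ∈ I, 2 * s k ≤ z) :
    -∑ k ∈ I, w k / (s k - z) ≤ ∑ k ∈ I, w k / s k := by
  have := mul_abs_sum_div_sub_le I (s := s) (z := z) (c := 1) one_pos hw fun k hk =>
    ⟨hs k hk, le_abs.2 (Or.inr (by linarith [hz k hk]))⟩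
  linarith [neg_abs_le (∑ k ∈ I, w k / (s k - z))]

end PartialFraction

theorem lt_mul_div_iff_of_eq_mul {w D d b c : ℝ} (hd : 0 < d) (hb : 0 < b) (h : w = D * d) :
    d < c * (w / b) ↔ b < c * D := by
  rw [h, ← mul_div_assoc, lt_div_iff₀ hb, ← mul_assoc, mul_comm d b, mul_lt_mul_iff_left₀ hd]

theorem mul_div_lt_iff_of_eq_mul {w D d b c : ℝ} (hd : 0 < d) (hb : 0 < b) (h : w = D * d) :
    c * (w / b) < d ↔ c * D < b := by
  rw [h, ← mul_div_assoc, div_lt_iff₀ hb, ← mul_assoc, mul_comm d b, mul_lt_mul_iff_left₀ hd]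

theorem lt_one_add_two_div_add_two_div_mul_sub_sub {lam kap b t S P : ℝ} (hlam : 1000 < lam)
    (hkap : 10 < kap) (hS0 : 0 ≤ S) (hS : 10 * (kap - 1) * S < b) (ht : lam * t < b)
    (hP : P ≤ 2 * S) :
    b < (1 + 2 / lam + 2 / kap) * (b - t - P) := by
  have hb : 0 < b := by nlinarith
  have hP' : 4 * kap * P < b := by nlinarith
  set c := lam * kap + 2 * kap + 2 * lam
  have e : (1 + 2 / lam + 2 / kap) * (b - t - P) = c * (b - t - P) / (lam * kap) := by
    field_simp; ring
  have ht' := mul_lt_mul_of_pos_left ht (by positivity : 0 < 4 * kap * c)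
  have hP'' := mul_lt_mul_of_pos_left hP' (by positivity : 0 < lam * c)
  have hc : 4 * (lam * kap) ^ 2 ≤ c * (4 * lam * kap - 4 * kap - lam) := by
    nlinarith [mul_pos (sub_pos.2 hlam) (sub_pos.2 hkap)]
  have hcb := mul_le_mul_of_nonneg_right hc hb.le
  rw [e, lt_div_iff₀ (by positivity)]
  refine lt_of_mul_lt_mul_left (a := 4 * lam * kap) ?_ (by positivity)
  linarith

theorem one_sub_two_div_mul_sub_sub_lt {kap b t S P : ℝ} (hkap : 10 < kap) (hS0 : 0 ≤ S)
    (hS : 10 * (kap - 1) * S < b) (ht : 0 < t) (hP : -S ≤ P) :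
    (1 - 2 / kap) * (b - t - P) < b := by
  have hb : 0 < b := by nlinarith
  have e : (1 - 2 / kap) * (b - t - P) = (kap - 2) * (b - t - P) / kap := by
    field_simp
  rw [e, div_lt_iff₀ (by positivity)]
  nlinarith

theorem lt_one_add_one_div_mul_mul_of_mul_sub_le {lam kap b t s W : ℝ} (hlam : 1000 < lam)
    (hkap : 10 < kap) (hs : 0 < s) (hb : lam * s < b) (hW : 10 * kap * W < b * s)
    (h : (b - s) * (t - b) ≤ W) :
    t < (1 + 1 / (lam * kap)) * b := by
  have hb0 : 0 < b := by nlinarith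
  rw [show (1 + 1 / (lam * kap)) * b = b + b / (lam * kap) by ring, ← sub_lt_iff_lt_add',
    lt_div_iff₀ (by positivity)]
  by_contra! hcon
  have h1 := mul_le_mul_of_nonneg_left hcon (by nlinarith : (0:ℝ) ≤ 10 * (b - s))
  have h2 := mul_le_mul_of_nonneg_left h (by positivity : (0:ℝ) ≤ 10 * kap * lam)
  have h3 := mul_lt_mul_of_pos_left hW (by positivity : (0:ℝ) < lam)
  have h4 := mul_lt_mul_of_pos_left hb hb0
  nlinarith [mul_pos hs hb0]

theorem lt_two_mul_of_sub_lt_mul_div {lam kap b S s t w : ℝ} (hlam : 2 ≤ lam) (hkap : 10 < kap)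
    (hs : 0 < s) (hw : 0 ≤ w) (hwS : w ≤ S * s) (hS : 10 * (kap - 1) * S < b)
    (h : s - t < (1 + 2 / lam + 2 / kap) * (w / b)) : s < 2 * t := by
  have hS0 : 0 ≤ S := nonneg_of_mul_nonneg_left (hw.trans hwS) hs
  have hb : 0 < b := by nlinarith
  have hc : 1 + 2 / lam + 2 / kap ≤ 3 := by
    have := (div_le_one (by linarith : (0:ℝ) < lam)).2 hlam
    have := (div_le_one (by linarith : (0:ℝ) < kap)).2 (by linarith : (2:ℝ) ≤ kap)
    linarith
  have hwb : w / b ≤ s / 6 := by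
    rw [div_le_div_iff₀ hb (by norm_num)]
    nlinarith [mul_le_mul_of_nonneg_right (by nlinarith : 6 * S ≤ b) hs.le]
  nlinarith [mul_le_mul_of_nonneg_right hc (div_nonneg hw hb.le)]

theorem mul_div_lt_div_of_mul_div_lt {κ w w' s s' : ℝ} (hw : 0 < w) (hs : 0 < s) (hs' : 0 < s')
    (h : κ * (s' / s) < w' / w) : κ * (w / s) < w' / s' := by
  rw [← mul_div_assoc, div_lt_div_iff₀ hs hw] at h
  rw [← mul_div_assoc, div_lt_div_iff₀ hs hs']
  linarith

theorem ten_mul_sub_one_mul_sum_div_lt {M : ℕ} {kap b : ℝ} {w s : ℕ → ℝ} (hM : 1 ≤ M)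
    (hkap : 0 ≤ kap) (hw : ∀ k ∈ Icc 1 M, 0 < w k) (hs : ∀ k ∈ Icc 1 M, 0 < s k)
    (hgrow : ∀ k ∈ Ico 1 M, kap * (s (k + 1) / s k) < w (k + 1) / w k)
    (hW : 10 * kap * ∑ k ∈ Icc 1 M, w k < b * s M) :
    10 * (kap - 1) * ∑ k ∈ Icc 1 M, w k / s k < b := by
  have h1 : (1 : ℕ) ∈ Icc 1 M := mem_Icc.2 ⟨le_rfl, hM⟩
  have hMM : M ∈ Icc 1 M := mem_Icc.2 ⟨hM, le_rfl⟩
  have hgeom := sub_one_mul_sum_Icc_le_mul hM (div_pos (hw 1 h1) (hs 1 h1)).le fun k hk => by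
    obtain ⟨hk1, hkM⟩ := mem_Ico.1 hk
    exact (mul_div_lt_div_of_mul_div_lt (hw k (mem_Icc.2 ⟨hk1, hkM.le⟩))
      (hs k (mem_Icc.2 ⟨hk1, hkM.le⟩)) (hs (k + 1) (mem_Icc.2 ⟨by omega, hkM⟩)) (hgrow k hk)).le
  have hwM : w M ≤ ∑ k ∈ Icc 1 M, w k := single_le_sum (fun k hk => (hw k hk).le) hMM
  have hlast : 10 * (kap * (w M / s M)) < b := by
    rw [← mul_div_assoc, ← mul_div_assoc, div_lt_iff₀ (hs M hMM)]
    nlinarith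
  linarith

theorem weight_eq_of_root {M n : ℕ} {b t : ℝ} {w s : ℕ → ℝ} (hn : n ∈ Icc 1 M) (ht : t < s n)
    (hroot : t - b + ∑ k ∈ Icc 1 M, w k / (s k - t) = 0) :
    w n = (b - t - (∑ k ∈ Ico 1 n, w k / (s k - t) + ∑ k ∈ Ioc n M, w k / (s k - t)))
      * (s n - t) := by
  rw [sum_Icc_eq_sum_Ico_add_add_sum_Ioc _ hn] at hroot
  exact (div_eq_iff (sub_pos.2 ht).ne').1 (by linarith)

theorem interior_root_bounds {M n : ℕ} {lam kap b t : ℝ} {w s : ℕ → ℝ}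
    (hlam : 1000 < lam) (hkap : 10 < kap)
    (hw : ∀ k ∈ Icc 1 M, 0 < w k) (hs : ∀ k ∈ Icc 1 M, 0 < s k)
    (hgap : ∀ j ∈ Icc 1 M, ∀ k ∈ Icc 1 M, j < k → lam * s j ≤ s k)
    (hS : 10 * (kap - 1) * ∑ k ∈ Icc 1 M, w k / s k < b)
    (hn : n ∈ Icc 1 M) (hroot : t - b + ∑ k ∈ Icc 1 M, w k / (s k - t) = 0)
    (htn : t < s n) (hbelow : ∀ k ∈ Ico 1 n, s k < t) (htb : lam * t < b) :
    (1 - 2 / kap) * (w n / b) < s n - t ∧ s n - t < (1 + 2 / lam + 2 / kap) * (w n / b) := by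
  have hIco : Ico 1 n ⊆ Icc 1 M := fun k hk => by
    simp only [mem_Ico, mem_Icc] at hk hn ⊢; omega
  have hIoc : Ioc n M ⊆ Icc 1 M := fun k hk => by
    simp only [mem_Ioc, mem_Icc] at hk hn ⊢; omega
  have hsn := hs n hn
  set S := ∑ k ∈ Icc 1 M, w k / s k
  set Pre := ∑ k ∈ Ico 1 n, w k / (s k - t)
  set Post := ∑ k ∈ Ioc n M, w k / (s k - t)
  have hd : 0 < s n - t := sub_pos.2 htn
  have hweight : w n = (b - t - (Pre + Post)) * (s n - t) := weight_eq_of_root hn htn hroot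
  have hsub : ∀ I ⊆ Icc 1 M, ∑ k ∈ I, w k / s k ≤ S := fun I hI =>
    sum_le_sum_of_subset_of_nonneg hI fun k hk _ => (div_pos (hw k hk) (hs k hk)).le
  have hS0 : 0 ≤ S := sum_nonneg fun k hk => (div_pos (hw k hk) (hs k hk)).le
  have hb : 0 < b := by nlinarith
  have hPre : Pre ≤ 0 :=
    sum_div_sub_nonpos _ (fun k hk => (hw k (hIco hk)).le) fun k hk => (hbelow k hk).le
  have hPost0 : 0 ≤ Post :=
    sum_div_sub_nonneg _ (fun k hk => (hw k (hIoc hk)).le) fun k hk => by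
      nlinarith [hgap n hn k (hIoc hk) (mem_Ioc.1 hk).1]
  have hPost : Post ≤ 2 * S := by
    refine (sum_div_sub_le_two_mul_sum_div _ (fun k hk => (hw k (hIoc hk)).le)
      (fun k hk => hs k (hIoc hk)) fun k hk => ?_).trans (by linarith [hsub _ hIoc])
    nlinarith [hgap n hn k (hIoc hk) (mem_Ioc.1 hk).1]
  have hupper : s n - t < (1 + 2 / lam + 2 / kap) * (w n / b) :=
    (lt_mul_div_iff_of_eq_mul hd hb hweight).2
      (lt_one_add_two_div_add_two_div_mul_sub_sub hlam hkap hS0 hS htb (by linarith))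
  have hhalf : s n < 2 * t := lt_two_mul_of_sub_lt_mul_div (by linarith) hkap hsn (hw n hn).le
    ((div_le_iff₀ hsn).1 (single_le_sum (fun k hk => (div_pos (hw k hk) (hs k hk)).le) hn))
    hS hupper
  have hPreS : -Pre ≤ ∑ k ∈ Ico 1 n, w k / s k :=
    neg_sum_div_sub_le_sum_div _ (fun k hk => (hw k (hIco hk)).le)
      (fun k hk => hs k (hIco hk)) fun k hk => by
        nlinarith [hgap k (hIco hk) n hn (mem_Ico.1 hk).2, hs k (hIco hk)]
  exact ⟨(mul_div_lt_iff_of_eq_mul hd hb hweight).2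
    (one_sub_two_div_mul_sub_sub_lt hkap hS0 hS (by linarith)
      (by linarith [hsub _ hIco])), hupper⟩

theorem last_root_bounds {M : ℕ} {lam kap b t : ℝ} {w s : ℕ → ℝ} (hlam : 1000 < lam)
    (hkap : 10 < kap) (hM : 1 ≤ M) (hw : ∀ k ∈ Icc 1 M, 0 < w k) (hsM : 0 < s M)
    (hle : ∀ k ∈ Icc 1 M, s k ≤ s M) (hb : lam * s M < b)
    (hW : 10 * kap * ∑ k ∈ Icc 1 M, w k < b * s M)
    (hroot : t - b + ∑ k ∈ Icc 1 M, w k / (s k - t) = 0) (ht : s M < t) :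
    b < t ∧ t < (1 + 1 / (lam * kap)) * b := by
  have hneg := sum_div_sub_neg (Icc 1 M) ⟨M, mem_Icc.2 ⟨hM, le_rfl⟩⟩ hw
    fun k hk => (hle k hk).trans_lt ht
  have hsum : ∑ k ∈ Icc 1 M, w k / (s k - t) = -(t - b) := by linarith
  have hbt : b < t := by linarith
  have hbound : (b - s M) * |∑ k ∈ Icc 1 M, w k / (s k - t)| ≤ ∑ k ∈ Icc 1 M, w k / 1 :=
    mul_abs_sum_div_sub_le _ (by nlinarith) (fun k hk => (hw k hk).le) fun k hk =>
      ⟨one_pos, le_abs.2 (Or.inr (by linarith [hle k hk]))⟩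
  rw [hsum, abs_neg, abs_of_pos (sub_pos.2 hbt)] at hbound
  simp only [div_one] at hbound
  exact ⟨hbt, lt_one_add_one_div_mul_mul_of_mul_sub_le hlam hkap hsM hb hW hbound⟩

theorem stmt10_general (N : ℕ) (hN : 2 ≤ N) (lam kap b : ℝ)
    (w s t : ℕ → ℝ)
    (hlam : 1000 < lam) (hkap : 10 < kap)
    (hwpos : ∀ n ∈ Finset.Icc 1 (N - 1), 0 < w n)
    (hb : lam * s (N - 1) < b)
    (hs : ∀ n ∈ Finset.Icc 1 (N - 2), lam * s n < s (n + 1) ∧ 0 < s n)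
    (hs1 : 0 < s 1)
    (hwgrow : ∀ n ∈ Finset.Icc 1 (N - 2), kap * (s (n + 1) / s n) < w (n + 1) / w n)
    (hsum2 : ∑ k ∈ Finset.Icc 1 (N - 1), w k < 1 / 10 * kap⁻¹ * (b * s (N - 1)))
    (hroot : ∀ n ∈ Finset.Icc 1 N,
      t n - b + ∑ k ∈ Finset.Icc 1 (N - 1), w k / (s k - t n) = 0)
    (hint : ∀ n ∈ Finset.Icc 1 (N - 1), t n < s n ∧ s n < t (n + 1)) :
    (∀ n ∈ Finset.Icc 1 (N - 1),
      (1 - 2 / kap) * (w n / b) < s n - t n ∧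
      s n - t n < (1 + 2 / lam + 2 / kap) * (w n / b)) ∧
    b < t N ∧ t N < (1 + 1 / (lam * kap)) * b := by
  obtain ⟨M, rfl⟩ : ∃ M, N = M + 1 := ⟨N - 1, by omega⟩
  have hM1 : 1 ≤ M := by omega
  have hM : M ∈ Icc 1 M := mem_Icc.2 ⟨hM1, le_rfl⟩
  have hIco : Icc 1 (M + 1 - 2) = Ico 1 M := by ext k; simp only [mem_Icc, mem_Ico]; omega
  simp only [Nat.add_sub_cancel, hIco] at hwpos hb hs hwgrow hsum2 hroot hint ⊢
  have hstep : ∀ k ∈ Ico 1 M, lam * s k < s (k + 1) := fun k hk => (hs k hk).1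
  have hspos := pos_of_mul_lt_succ (by linarith) hs1 hstep
  have hmono := le_of_le_of_mul_lt_succ (by linarith) hs1 hstep
  have hW : 10 * kap * ∑ k ∈ Icc 1 M, w k < b * s M := by
    rwa [show 1 / 10 * kap⁻¹ * (b * s M) = b * s M / (10 * kap) by ring,
      lt_div_iff₀ (by positivity), mul_comm] at hsum2
  have hS := ten_mul_sub_one_mul_sum_div_lt hM1 (by linarith) hwpos hspos hwgrow hW
  refine ⟨fun n hn => ?_, last_root_bounds hlam hkap hM1 hwpos (hspos M hM)
    (fun k hk => hmono k hk M hM (mem_Icc.1 hk).2) hb hW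
    (hroot (M + 1) (mem_Icc.2 ⟨by omega, le_rfl⟩)) (hint M hM).2⟩
  obtain ⟨hn1, hnM⟩ := mem_Icc.1 hn
  refine interior_root_bounds hlam hkap hwpos hspos
    (mul_le_of_lt_of_mul_lt_succ (by linarith) hs1 hstep) hS hn
    (hroot n (mem_Icc.2 ⟨hn1, by omega⟩)) (hint n hn).1 (fun k hk => ?_) ?_
  · obtain ⟨hk1, hkn⟩ := mem_Ico.1 hk
    have hprev := (hint (n - 1) (mem_Icc.2 ⟨by omega, by omega⟩)).2
    rw [Nat.sub_add_cancel hn1] at hprev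
    exact (hmono k (mem_Icc.2 ⟨hk1, by omega⟩) (n - 1) (mem_Icc.2 ⟨by omega, by omega⟩)
      (by omega)).trans_lt hprev
  · calc lam * t n < lam * s n := mul_lt_mul_of_pos_left (hint n hn).1 (by linarith)
      _ ≤ lam * s M := mul_le_mul_of_nonneg_left (hmono n hn M hM hnM) (by linarith)
      _ < b := hb

/-- Root localization for one step of the reversed Stieltjes algorithm. -/
theorem stmt10 (N : ℕ) (hN : 2 ≤ N) (lam kap th b : ℝ)
    (w s t μ : ℕ → ℝ)
    (hlam : 1000 < lam) (hkap : 10 < kap) (hth : th < 1)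
    (hwpos : ∀ n ∈ Finset.Icc 1 (N - 1), 0 < w n)
    (hb : lam * s (N - 1) < b)
    (hs : ∀ n ∈ Finset.Icc 1 (N - 2), lam * s n < s (n + 1) ∧ 0 < s n)
    (hs1 : 0 < s 1)
    (hwgrow : ∀ n ∈ Finset.Icc 1 (N - 2), kap * (s (n + 1) / s n) < w (n + 1) / w n)
    (hwdec : ∀ n ∈ Finset.Icc 1 (N - 2), w (n + 1) / s (n + 1) ^ 2 < th * (w n / s n ^ 2))
    (hsum1 : 10 * th⁻¹ * s (N - 1) ^ 2 < ∑ k ∈ Finset.Icc 1 (N - 1), w k)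
    (hsum2 : ∑ k ∈ Finset.Icc 1 (N - 1), w k < 1 / 10 * kap⁻¹ * (b * s (N - 1)))
    (hroot : ∀ n ∈ Finset.Icc 1 N,
      t n - b + ∑ k ∈ Finset.Icc 1 (N - 1), w k / (s k - t n) = 0)
    (hint : ∀ n ∈ Finset.Icc 1 (N - 1), t n < s n ∧ s n < t (n + 1))
    (hμ : ∀ n ∈ Finset.Icc 1 N,
      μ n = (1 + ∑ k ∈ Finset.Icc 1 (N - 1), w k / (s k - t n) ^ 2)⁻¹) :
    (∀ n ∈ Finset.Icc 1 (N - 1),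
      (1 - 2 / kap) * (w n / b) < s n - t n ∧
      s n - t n < (1 + 2 / lam + 2 / kap) * (w n / b)) ∧
    b < t N ∧ t N < (1 + 1 / (lam * kap)) * b :=
  stmt10_general N hN lam kap b w s t hlam hkap hwpos hb hs hs1 hwgrow hsum2 hroot hint
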